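/- arXiv:2503.17764 — 4 statements merged into one kernel-verified Lean document; each statement's English description precedes it below -/
import Mathlib

section
/- (Monotonicity) Let C be an [n,k] linear code over F_q with k > 0. Then 1 ≤ d_1(C) < d_2(C) < ··· < d_k(C) ≤ n, i.e., the generalized Hamming weights form a strictly increasing sequence bounded below by 1 and above by n. -/
/-!
Take a subcode `D` of dimension `r + 1` whose support has the minimal size `d_{r+1}(C)`, and a
coordinate `i` in that support. The coordinate functional `c ↦ c i` is nonzero on `D`, so its
kernel in `D` has dimension `r`, and its support misses `i`; hence `d_r(C) < d_{r+1}(C)`.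
The case `r = 0` gives `d_1(C) > d_0(C) = 0`.
-/

open Classical

/-- The support of a linear subspace `D` of `ι → F`:
the set of coordinates at which some element of `D` is nonzero. -/
def Submodule.suppSet {F ι : Type*} [Field F] (D : Submodule F (ι → F)) : Set ι :=
  {i | ∃ c ∈ D, c i ≠ 0}

/-- The `r`-th generalized Hamming weight of a linear code `C ⊆ F^ι`:
the minimum support size of an `r`-dimensional subcode of `C`. -/
noncomputable def ghw {F ι : Type*} [Field F] (C : Submodule F (ι → F)) (r : ℕ) : ℕ :=
  sInf {w | ∃ D : Submodule F (ι → F),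
    D ≤ C ∧ Module.finrank F D = r ∧ D.suppSet.ncard = w}

/-- The `r`-th relative generalized Hamming weight of the nested pair `C₂ ⊆ C₁`:
the minimum support size of an `r`-dimensional subcode `D` of `C₁` with `D ∩ C₂ = 0`. -/
noncomputable def rghw {F ι : Type*} [Field F] (C₁ C₂ : Submodule F (ι → F)) (r : ℕ) : ℕ :=
  sInf {w | ∃ D : Submodule F (ι → F),
    D ≤ C₁ ∧ D ⊓ C₂ = ⊥ ∧ Module.finrank F D = r ∧ D.suppSet.ncard = w}

/-- The dual code of `C ⊆ F^n` with respect to the standard Euclidean inner product. -/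
def dualCode {F : Type*} [Field F] {n : ℕ} (C : Submodule F (Fin n → F)) :
    Submodule F (Fin n → F) where
  carrier := {x | ∀ c ∈ C, ∑ i, x i * c i = 0}
  add_mem' := by
    intro a b ha hb c hc
    simp only [Set.mem_setOf_eq] at *
    simp [Pi.add_apply, add_mul, Finset.sum_add_distrib, ha c hc, hb c hc]
  zero_mem' := by simp
  smul_mem' := by
    intro t a ha c hc
    simp only [Set.mem_setOf_eq] at *
    simp [Pi.smul_apply, smul_eq_mul, mul_assoc, ← Finset.mul_sum, ha c hc]

namespace Submodule

variable {F ι : Type*} [Field F]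

lemma exists_le_finrank_eq {M : Type*} [AddCommGroup M] [Module F M] (W : Submodule F M)
    {r : ℕ} (hr : r ≤ Module.finrank F W) : ∃ E ≤ W, Module.finrank F E = r := by
  obtain ⟨f, hf⟩ := exists_linearIndependent_of_le_finrank (R := F) (M := W) hr
  refine ⟨span F (Set.range (W.subtype ∘ f)), ?_, ?_⟩
  · rw [span_le]
    rintro _ ⟨i, rfl⟩
    exact (f i).2
  · rw [finrank_span_eq_card (hf.map' W.subtype W.ker_subtype), Fintype.card_fin]

lemma suppSet_inf_ker_proj_subset (D : Submodule F (ι → F)) (i : ι) :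
    (D ⊓ LinearMap.ker (LinearMap.proj i)).suppSet ⊆ D.suppSet \ {i} :=
  fun _ ⟨c, ⟨hcD, hci⟩, hcj⟩ => ⟨⟨c, hcD, hcj⟩, fun hji => hcj (hji ▸ hci)⟩

lemma finrank_inf_ker_proj_add_one {D : Submodule F (ι → F)} [FiniteDimensional F D] {i : ι}
    (hi : i ∈ D.suppSet) :
    Module.finrank F ↥(D ⊓ LinearMap.ker (LinearMap.proj i)) + 1 = Module.finrank F D := by
  set φ : Module.Dual F D := (LinearMap.proj i).domRestrict D
  have hφ : φ ≠ 0 := by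
    obtain ⟨c, hcD, hci⟩ := hi
    exact fun h => hci (LinearMap.congr_fun h ⟨c, hcD⟩)
  have hker : D ⊓ LinearMap.ker (LinearMap.proj i) = (LinearMap.ker φ).map D.subtype := by
    rw [LinearMap.ker_domRestrict, map_comap_subtype]
  rw [hker, finrank_map_subtype_eq, Module.Dual.finrank_ker_add_one_of_ne_zero hφ]

end Submodule

section GeneralizedHammingWeight

variable {F ι : Type*} [Field F]

lemma ghw_le_ncard_suppSet {C D : Submodule F (ι → F)} (hDC : D ≤ C) :
    ghw C (Module.finrank F D) ≤ D.suppSet.ncard :=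
  Nat.sInf_le ⟨D, hDC, rfl, rfl⟩

lemma exists_ncard_suppSet_eq_ghw {C : Submodule F (ι → F)} {r : ℕ}
    (hr : r ≤ Module.finrank F C) :
    ∃ D ≤ C, Module.finrank F D = r ∧ D.suppSet.ncard = ghw C r := by
  obtain ⟨E, hEC, hE⟩ := C.exists_le_finrank_eq hr
  exact Nat.sInf_mem (s := {w | ∃ D ≤ C, Module.finrank F D = r ∧ D.suppSet.ncard = w})
    ⟨_, E, hEC, hE, rfl⟩

lemma ghw_lt_ghw_succ [Finite ι] {C : Submodule F (ι → F)} {r : ℕ}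
    (hr : r + 1 ≤ Module.finrank F C) : ghw C r < ghw C (r + 1) := by
  obtain ⟨D, hDC, hD, hDw⟩ := exists_ncard_suppSet_eq_ghw hr
  have : FiniteDimensional F D := Module.finite_of_finrank_pos (by omega)
  obtain ⟨c, hcD, hc⟩ := D.exists_mem_ne_zero_of_ne_bot (by rintro rfl; simp at hD)
  obtain ⟨i, hci⟩ := Function.ne_iff.mp hc
  have hi : i ∈ D.suppSet := ⟨c, hcD, hci⟩
  have hE : Module.finrank F ↥(D ⊓ LinearMap.ker (LinearMap.proj i)) = r := by
    have := Submodule.finrank_inf_ker_proj_add_one hi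
    omega
  calc ghw C r ≤ (D ⊓ LinearMap.ker (LinearMap.proj i)).suppSet.ncard :=
        hE ▸ ghw_le_ncard_suppSet (inf_le_left.trans hDC)
    _ ≤ (D.suppSet \ {i}).ncard := Set.ncard_le_ncard (D.suppSet_inf_ker_proj_subset i)
    _ < D.suppSet.ncard := Set.ncard_sdiff_singleton_lt_of_mem hi
    _ = ghw C (r + 1) := hDw

lemma ghw_finrank_le_card [Finite ι] (C : Submodule F (ι → F)) :
    ghw C (Module.finrank F C) ≤ Nat.card ι :=
  (ghw_le_ncard_suppSet le_rfl).trans (Set.ncard_le_card _)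

end GeneralizedHammingWeight

theorem statement_1_general {F : Type*} [Field F] {n k : ℕ}
    (C : Submodule F (Fin n → F)) (hk : Module.finrank F C = k) (hkpos : 0 < k) :
    1 ≤ ghw C 1 ∧ (∀ r : ℕ, 1 ≤ r → r < k → ghw C r < ghw C (r + 1)) ∧ ghw C k ≤ n := by
  subst hk
  refine ⟨Nat.one_le_of_lt (ghw_lt_ghw_succ (r := 0) hkpos), ?_, ?_⟩
  · exact fun r _ hr => ghw_lt_ghw_succ hr
  · simpa using ghw_finrank_le_card C

/-- Monotonicity: for an `[n,k]` linear code `C` with `k > 0`,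
`1 ≤ d_1(C) < d_2(C) < ⋯ < d_k(C) ≤ n`. -/
theorem statement_1 {F : Type*} [Field F] [Fintype F] {n k : ℕ}
    (C : Submodule F (Fin n → F)) (hk : Module.finrank F C = k) (hkpos : 0 < k) :
    1 ≤ ghw C 1 ∧ (∀ r : ℕ, 1 ≤ r → r < k → ghw C r < ghw C (r + 1)) ∧ ghw C k ≤ n :=
  statement_1_general C hk hkpos
end

section
/- (Lower bound from disjoint information sets) Let C ⊆ F_q^n be a linear code of dimension k and let I_1, ..., I_m ⊆ {1,...,n} be pairwise disjoint information sets for C. For each j, let G_j be a generator matrix of C whose columns indexed by I_j form the identity I_k. Let D ⊆ C be a subcode of dimension r and let w ≥ r be an integer such that, for every j = 1, ..., m, the projection E_j = π_{I_j}(D) ⊆ F_q^{I_j} satisfies |supp(E_j)| ≥ w + 1 (equivalently, D is not of the form enc_{G_j}(E) for any subspace E with |supp(E)| ≤ w). Then |supp(D)| ≥ m(w + 1). -/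
open Classical

theorem Submodule.suppSet_map_funLeft {F ι κ : Type*} [Field F] (D : Submodule F (ι → F))
    (f : κ → ι) : (D.map (LinearMap.funLeft F F f)).suppSet = f ⁻¹' D.suppSet := by
  ext i
  simp [Submodule.suppSet, LinearMap.funLeft_apply]

theorem Finset.ncard_preimage_val {α : Type*} (S : Set α) (s : Finset α) :
    (Subtype.val ⁻¹' S : Set s).ncard = (S ∩ s).ncard := by
  rw [← Set.ncard_image_of_injective _ Subtype.val_injective]
  congr 1
  ext x
  simp [and_comm]

theorem Set.sum_ncard_inter_le {α ι : Type*} [Finite α] [Fintype ι] (S : Set α)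
    (s : ι → Set α) (hs : Pairwise fun i j ↦ Disjoint (s i) (s j)) :
    ∑ j, (S ∩ s j).ncard ≤ S.ncard := by
  rw [← finsum_eq_sum_of_fintype,
    ← Set.ncard_iUnion_of_finite (fun _ ↦ Set.toFinite _)
      (fun i j hij ↦ (hs hij).mono Set.inter_subset_right Set.inter_subset_right)]
  exact Set.ncard_le_ncard (Set.iUnion_subset fun _ ↦ Set.inter_subset_left)

theorem statement_14_general {F : Type*} [Field F] {n m w : ℕ}
    (I : Fin m → Finset (Fin n))
    (hdisj : ∀ i j : Fin m, i ≠ j → Disjoint (I i) (I j))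
    (D : Submodule F (Fin n → F))
    (hsupp : ∀ j : Fin m, w + 1 ≤
      (Submodule.map (LinearMap.funLeft F F ((↑) : ↥(I j) → Fin n)) D).suppSet.ncard) :
    m * (w + 1) ≤ D.suppSet.ncard := by
  have hsupp_inter : ∀ j, w + 1 ≤ (D.suppSet ∩ I j).ncard := fun j ↦ by
    simpa only [Submodule.suppSet_map_funLeft, Finset.ncard_preimage_val] using hsupp j
  calc m * (w + 1) = ∑ _j : Fin m, (w + 1) := by simp
    _ ≤ ∑ j, (D.suppSet ∩ I j).ncard := Finset.sum_le_sum fun j _ ↦ hsupp_inter j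
    _ ≤ D.suppSet.ncard :=
      Set.sum_ncard_inter_le _ _ fun i j hij ↦ Finset.disjoint_coe.mpr (hdisj i j hij)

/-- Lower bound from disjoint information sets: let `I_1, …, I_m` be
pairwise disjoint information sets for the `[n,k]` code `C`, with generator matrices
`G_j` whose columns indexed by `I_j` form the identity. If `D ⊆ C` is a subcode of
dimension `r` and `w ≥ r` is such that each projection `E_j = π_{I_j}(D)` satisfies
`|supp(E_j)| ≥ w + 1`, then `|supp(D)| ≥ m(w + 1)`. -/
theorem statement_14 {F : Type*} [Field F] [Fintype F] {n k m r w : ℕ}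
    (C : Submodule F (Fin n → F)) (hk : Module.finrank F C = k)
    (I : Fin m → Finset (Fin n))
    (hdisj : ∀ i j : Fin m, i ≠ j → Disjoint (I i) (I j))
    (hcard : ∀ j : Fin m, (I j).card = k)
    (G : Fin m → Matrix (Fin k) (Fin n) F)
    (hGind : ∀ j : Fin m, LinearIndependent F (fun i => G j i))
    (hGspan : ∀ j : Fin m, Submodule.span F (Set.range fun i => G j i) = C)
    (hGid : ∀ j : Fin m, ∀ a b : Fin k,
      G j a (((I j).orderIsoOfFin (hcard j) b : Fin n)) = if a = b then 1 else 0)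
    (D : Submodule F (Fin n → F)) (hD : D ≤ C) (hr : Module.finrank F D = r)
    (hrw : r ≤ w)
    (hsupp : ∀ j : Fin m, w + 1 ≤
      (Submodule.map (LinearMap.funLeft F F ((↑) : ↥(I j) → Fin n)) D).suppSet.ncard) :
    m * (w + 1) ≤ D.suppSet.ncard :=
  statement_14_general I hdisj D hsupp
end

section
/- (Inclusion–exclusion count of subspaces with given support size) Fix a prime power q and integers 1 ≤ r ≤ w ≤ k. Let e_w^r denote the number of r-dimensional linear subspaces E ⊆ F_q^k with |supp(E)| = w, and for integers 0 ≤ s ≤ m let G_q(m, s) denote the number of s-dimensional linear subspaces of F_q^m (the Gaussian binomial coefficient [m choose s]_q). Then e_w^r = C(k,w) · Σ_{i=0}^{w−r} (−1)^i C(w,i) G_q(w−i, r), where C(a,b) denotes the ordinary binomial coefficient. -/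
open Classical

/-! Sort the `r`-dimensional subspaces of `F^k` by their support. Those supported inside a set
`S` of coordinates are the `r`-dimensional subspaces of the coordinate space `F^S`, so there are
`G_q(|S|, r)` of them. Möbius inversion on the Boolean lattice of subsets of a `w`-set `T` then
counts those with support exactly `T` as `Σ_{S ⊆ T} (-1)^{|T|-|S|} G_q(|S|, r)`, which depends
only on `w`; summing over the `C(k, w)` choices of `T` and reindexing by `i = w - |S|` gives the
formula, the terms with `w - i < r` being zero. -/

open Finset Module

namespace Finset
variable {α ι : Type*} [DecidableEq ι]

theorem sum_powerset_superset_neg_one_pow (U T : Finset ι) :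
    ∑ S ∈ T.powerset with U ⊆ S, (-1 : ℤ) ^ (#T - #S) = if U = T then 1 else 0 := by
  by_cases hUT : U ⊆ T
  · calc ∑ S ∈ T.powerset with U ⊆ S, (-1 : ℤ) ^ (#T - #S)
        = ∑ V ∈ (T \ U).powerset, (-1 : ℤ) ^ #V := by
          refine sum_nbij' (T \ ·) (T \ ·) (fun S hS => ?_) (fun V hV => ?_) (fun S hS => ?_)
            (fun V hV => ?_) (fun S hS => ?_) <;>
            simp only [mem_filter, mem_powerset] at *
          · exact sdiff_subset_sdiff subset_rfl hS.2
          · exact ⟨sdiff_subset,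
              subset_sdiff.2 ⟨hUT, disjoint_of_subset_right hV disjoint_sdiff⟩⟩
          · exact sdiff_sdiff_eq_self hS.1
          · exact sdiff_sdiff_eq_self (hV.trans sdiff_subset)
          · rw [card_sdiff_of_subset hS.1]
      _ = if U = T then 1 else 0 := by
          simp only [sum_powerset_neg_one_pow_card, sdiff_eq_empty_iff_subset]
          exact if_congr ⟨hUT.antisymm, fun h => h ▸ subset_rfl⟩ rfl rfl
  · rw [if_neg (fun h => hUT h.le)]
    refine sum_eq_zero fun S hS => absurd ?_ hUT
    rw [mem_filter, mem_powerset] at hS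
    exact hS.2.trans hS.1

theorem card_filter_eq_sum_powerset (s : Finset α) (σ : α → Finset ι) (T : Finset ι) :
    (#{a ∈ s | σ a = T} : ℤ) =
      ∑ S ∈ T.powerset, (-1 : ℤ) ^ (#T - #S) * #{a ∈ s | σ a ⊆ S} := by
  simp only [card_filter, Nat.cast_sum, Nat.cast_ite, Nat.cast_one, Nat.cast_zero, mul_sum,
    mul_ite, mul_one, mul_zero]
  rw [sum_comm]
  refine sum_congr rfl fun a _ => ?_
  rw [← sum_filter, sum_powerset_superset_neg_one_pow]

theorem card_filter_card_eq [Fintype ι] (s : Finset α) (σ : α → Finset ι) (w : ℕ) :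
    #{a ∈ s | #(σ a) = w} = ∑ T ∈ powersetCard w univ, #{a ∈ s | σ a = T} := by
  rw [card_eq_sum_card_fiberwise (f := σ) (t := powersetCard w univ)]
  · refine sum_congr rfl fun T hT => ?_
    rw [mem_powersetCard_univ] at hT
    rw [filter_filter]
    exact congrArg card (filter_congr fun a _ => ⟨And.right, fun h => ⟨h ▸ hT, h⟩⟩)
  · intro a ha
    rw [mem_coe, mem_filter] at ha
    rw [mem_coe, mem_powersetCard_univ]
    exact ha.2

theorem card_filter_card_eq_of_card_filter_subset [Fintype ι] (s : Finset α)
    (σ : α → Finset ι) (g : ℕ → ℤ) (hg : ∀ S, (#{a ∈ s | σ a ⊆ S} : ℤ) = g #S)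
    (w : ℕ) :
    (#{a ∈ s | #(σ a) = w} : ℤ) = (Fintype.card ι).choose w *
      ∑ j ∈ range (w + 1), w.choose j * ((-1) ^ (w - j) * g j) := by
  have hfiber : ∀ T ∈ powersetCard w (univ : Finset ι), (#{a ∈ s | σ a = T} : ℤ) =
      ∑ j ∈ range (w + 1), w.choose j * ((-1) ^ (w - j) * g j) := by
    intro T hT
    rw [mem_powersetCard_univ] at hT
    simp only [card_filter_eq_sum_powerset, hg]
    rw [sum_powerset_apply_card (fun m => (-1 : ℤ) ^ (#T - m) * g m), hT]
    simp only [nsmul_eq_mul]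
  rw [card_filter_card_eq, Nat.cast_sum, sum_congr rfl hfiber, sum_const, card_powersetCard,
    card_univ, nsmul_eq_mul]

theorem sum_range_choose_neg_one_pow_reflect (g : ℕ → ℤ) {r : ℕ} (hg : ∀ j < r, g j = 0)
    (w : ℕ) :
    ∑ j ∈ range (w + 1), w.choose j * ((-1) ^ (w - j) * g j) =
      ∑ i ∈ range (w - r + 1), (-1) ^ i * w.choose i * g (w - i) := by
  calc _ = ∑ i ∈ range (w + 1), (-1) ^ i * w.choose i * g (w - i) := by
        rw [← sum_range_reflect]
        refine sum_congr rfl fun i hi => ?_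
        have hiw : i ≤ w := Nat.lt_succ_iff.1 (mem_range.1 hi)
        rw [Nat.add_sub_cancel, Nat.sub_sub_self hiw, Nat.choose_symm hiw]
        ring
    _ = _ := by
        refine (sum_subset (range_subset_range.2 (by omega)) fun i hi hi' => ?_).symm
        rw [mem_range] at hi hi'
        rw [hg _ (by omega), mul_zero]

end Finset

namespace Submodule

section
variable {R V V' : Type*} [Ring R] [AddCommGroup V] [Module R V] [AddCommGroup V'] [Module R V']

theorem card_finrank_eq_and_le (W : Submodule R V) (r : ℕ) :
    Nat.card {E : Submodule R V // finrank R E = r ∧ E ≤ W} =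
      Nat.card {E : Submodule R W // finrank R E = r} :=
  Nat.card_congr <|
    (Equiv.subtypeEquivRight fun _ => and_comm).trans <|
    (Equiv.subtypeSubtypeEquivSubtypeInter (· ≤ W) (finrank R · = r)).symm.trans <|
    ((MapSubtype.orderIso W).toEquiv.subtypeEquiv
      fun E => by rw [← finrank_map_subtype_eq W E]; rfl).symm

theorem card_finrank_eq_of_linearEquiv (e : V ≃ₗ[R] V') (r : ℕ) :
    Nat.card {E : Submodule R V // finrank R E = r} =
      Nat.card {E : Submodule R V' // finrank R E = r} :=
  Nat.card_congr <| (orderIsoMapComap e).toEquiv.subtypeEquiv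
    fun E => by rw [← LinearEquiv.finrank_map_eq e E]; rfl

theorem card_finrank_eq_eq_zero_of_finrank_lt [StrongRankCondition R] [Module.Finite R V] {r : ℕ}
    (h : finrank R V < r) : Nat.card {E : Submodule R V // finrank R E = r} = 0 := by
  have : IsEmpty {E : Submodule R V // finrank R E = r} :=
    ⟨fun E => (E.2 ▸ E.1.finrank_le).not_gt h⟩
  exact Nat.card_of_isEmpty

end

section
variable {F ι : Type*} [Field F]

theorem suppSet_subset_iff_le {E : Submodule F (ι → F)} {T : Set ι} :
    E.suppSet ⊆ T ↔ E ≤ ⨅ i ∈ Tᶜ, LinearMap.ker (LinearMap.proj i) := by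
  simp only [SetLike.le_def, mem_iInf, LinearMap.mem_ker, LinearMap.proj_apply,
    Set.mem_compl_iff]
  exact ⟨fun h c hc i hi => by_contra fun hci => hi (h ⟨c, hc, hci⟩),
    fun h i ⟨c, hc, hci⟩ => by_contra fun hi => hci (h hc i hi)⟩

theorem card_finrank_eq_and_suppSet_subset (T : Finset ι) (r : ℕ) :
    Nat.card {E : Submodule F (ι → F) // finrank F E = r ∧ E.suppSet ⊆ T} =
      Nat.card {S : Submodule F (Fin #T → F) // finrank F S = r} := by
  simp_rw [suppSet_subset_iff_le]
  rw [card_finrank_eq_and_le]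
  exact card_finrank_eq_of_linearEquiv ((LinearMap.iInfKerProjEquiv F (fun _ => F)
    disjoint_compl_right (by simp)).trans (LinearEquiv.funCongrLeft F F T.equivFin.symm)) r

end

end Submodule

theorem statement_16_general {F : Type*} [Field F] [Fintype F] {k r w : ℕ} :
    (Nat.card {E : Submodule F (Fin k → F) //
        Module.finrank F E = r ∧ E.suppSet.ncard = w} : ℤ)
      = (k.choose w : ℤ) * ∑ i ∈ Finset.range (w - r + 1),
          (-1 : ℤ) ^ i * (w.choose i : ℤ) *
            (Nat.card {S : Submodule F (Fin (w - i) → F) //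
              Module.finrank F S = r} : ℤ) := by
  set g : ℕ → ℤ := fun m => Nat.card {S : Submodule F (Fin m → F) // finrank F S = r}
  set s : Finset (Submodule F (Fin k → F)) := {E | finrank F E = r}
  have hg : ∀ j < r, g j = 0 := fun j hj => by
    simp only [g]
    exact_mod_cast Submodule.card_finrank_eq_eq_zero_of_finrank_lt (V := Fin j → F)
      (by rwa [finrank_fin_fun])
  have hsubset : ∀ S : Finset (Fin k), (#{E ∈ s | E.suppSet.toFinset ⊆ S} : ℤ) = g #S := by
    intro S
    simp only [g]
    rw [← Submodule.card_finrank_eq_and_suppSet_subset, Nat.card_eq_fintype_card,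
      Fintype.card_subtype, filter_filter]
    simp only [Set.toFinset_subset]
  have hcount : Nat.card {E : Submodule F (Fin k → F) //
      finrank F E = r ∧ E.suppSet.ncard = w} = #{E ∈ s | #E.suppSet.toFinset = w} := by
    rw [Nat.card_eq_fintype_card, Fintype.card_subtype, filter_filter]
    simp only [Set.ncard_eq_toFinset_card']
  rw [hcount, card_filter_card_eq_of_card_filter_subset _ _ g hsubset, Fintype.card_fin,
    sum_range_choose_neg_one_pow_reflect g hg]

/-- Inclusion–exclusion count of subspaces with given support size:
for a finite field `F` with `q` elements and `1 ≤ r ≤ w ≤ k`, the number `e_w^r` of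
`r`-dimensional subspaces `E ⊆ F^k` with `|supp(E)| = w` satisfies
`e_w^r = C(k,w) · Σ_{i=0}^{w-r} (-1)^i C(w,i) [w-i choose r]_q`, where the Gaussian
binomial `[m choose s]_q` is the number of `s`-dimensional subspaces of `F^m`. -/
theorem statement_16 {F : Type*} [Field F] [Fintype F] {k r w : ℕ}
    (hr : 1 ≤ r) (hrw : r ≤ w) (hwk : w ≤ k) :
    (Nat.card {E : Submodule F (Fin k → F) //
        Module.finrank F E = r ∧ E.suppSet.ncard = w} : ℤ)
      = (k.choose w : ℤ) * ∑ i ∈ Finset.range (w - r + 1),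
          (-1 : ℤ) ^ i * (w.choose i : ℤ) *
            (Nat.card {S : Submodule F (Fin (w - i) → F) //
              Module.finrank F S = r} : ℤ) :=
  statement_16_general
end

section
/- (RGHWs of a pair do not determine the RGHWs of the dual pair) Over F_2, let C_1, C_2, C_1', C_2' ⊆ F_2^{10} be the linear codes generated respectively by the rows of G_1 = [[0,1,0,1,0,0,1,0,0,0],[1,1,1,1,1,1,1,0,1,0],[0,0,0,0,0,0,1,1,0,1],[1,0,0,1,0,0,0,0,0,0],[0,0,1,1,0,1,0,0,0,0]], G_2 = [[0,1,0,1,0,0,1,0,0,0],[1,1,1,1,1,1,1,0,1,0],[0,0,0,0,0,0,1,1,0,1]], G_1' = [[1,1,0,1,0,0,0,0,0,1],[0,1,0,1,1,1,0,1,0,0],[1,0,1,0,0,0,1,0,1,0],[1,1,1,0,0,0,0,0,0,0],[0,1,0,1,0,0,0,0,0,0]], and G_2' = [[1,1,0,1,0,0,0,0,0,1],[0,1,0,1,1,1,0,1,0,0],[1,0,1,0,0,0,1,0,1,0]]. Then C_2 ⊆ C_1 and C_2' ⊆ C_1', and: M_1(C_1,C_2) = M_1(C_1',C_2') = 2 and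 M_2(C_1,C_2) = M_2(C_1',C_2') = 4 (so the two pairs have the same relative weight hierarchy), while for the dual pairs M_1(C_2^⊥,C_1^⊥) = M_1((C_2')^⊥,(C_1')^⊥) = 2 but M_2(C_2^⊥,C_1^⊥) = 3 ≠ 4 = M_2((C_2')^⊥,(C_1')^⊥). -/
open Classical

/-!
Everything reduces to finite computations over `𝔽₂`. The first relative weight is the least
weight of a codeword of `C₁` outside `C₂`. Over `𝔽₂` a `2`-dimensional subcode meeting `C₂`
trivially is `{0, z, w, z + w}` with `z, w, z + w ∉ C₂`, and its support is
`supp z ∪ supp w`; so the second relative weight is a minimum over such pairs. The dual of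
an `[n, k]` code has dimension `n - k`, so `n - k` independent vectors orthogonal to the code
generate it; every code in sight is then the span of explicit rows, membership in each code
is decidable, and each weight is checked by enumerating coefficient vectors.
-/

open Finset Submodule

namespace Submodule

section Support

variable {F ι : Type*} [Field F]

theorem suppSet_span (s : Set (ι → F)) : (span F s).suppSet = {i | ∃ x ∈ s, x i ≠ 0} := by
  refine Set.ext fun i => ⟨fun ⟨c, hc, hci⟩ => by_contra fun h => hci ?_,
    fun ⟨x, hx, hxi⟩ => ⟨x, subset_span hx, hxi⟩⟩
  clear hci
  induction hc using span_induction with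
  | mem x hx => exact by_contra fun hxi => h ⟨x, hx, hxi⟩
  | zero => rfl
  | add x y _ _ hx hy => simp [hx, hy]
  | smul a x _ hx => simp [hx]

theorem suppSet_mono {D D' : Submodule F (ι → F)} (h : D ≤ D') : D.suppSet ⊆ D'.suppSet :=
  fun _ ⟨c, hc, hci⟩ => ⟨c, h hc, hci⟩

variable [Fintype ι] [DecidableEq F]

theorem ncard_suppSet_span_singleton (x : ι → F) :
    (span F {x}).suppSet.ncard = hammingNorm x := by
  rw [suppSet_span, hammingNorm, ← Set.ncard_coe_finset]
  simp

theorem ncard_suppSet_span_pair (x y : ι → F) :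
    (span F {x, y}).suppSet.ncard = #{i | x i ≠ 0 ∨ y i ≠ 0} := by
  rw [suppSet_span, ← Set.ncard_coe_finset]
  simp

theorem hammingNorm_le_ncard_suppSet {D : Submodule F (ι → F)} {x : ι → F} (hx : x ∈ D) :
    hammingNorm x ≤ D.suppSet.ncard := by
  rw [← ncard_suppSet_span_singleton]
  exact Set.ncard_le_ncard (suppSet_mono ((span_singleton_le_iff_mem x D).2 hx))

theorem card_support_pair_le_ncard_suppSet {D : Submodule F (ι → F)} {x y : ι → F}
    (hx : x ∈ D) (hy : y ∈ D) : #{i | x i ≠ 0 ∨ y i ≠ 0} ≤ D.suppSet.ncard := by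
  rw [← ncard_suppSet_span_pair]
  exact Set.ncard_le_ncard (suppSet_mono (span_le.2 (Set.pair_subset hx hy)))

end Support

theorem forall_mem_span_range_iff {R M α : Type*} [Semiring R] [AddCommMonoid M] [Module R M]
    [Fintype α] {v : α → M} {P : M → Prop} :
    (∀ x ∈ span R (Set.range v), P x) ↔ ∀ c : α → R, P (∑ i, c i • v i) := by
  simp [mem_span_range_iff_exists_fun]

instance decidableMemSpanRange {R M α : Type*} [Semiring R] [Fintype R] [AddCommMonoid M]
    [Module R M] [DecidableEq M] [Fintype α] [DecidableEq α] (v : α → M) (x : M) :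
    Decidable (x ∈ span R (Set.range v)) :=
  decidable_of_iff _ (mem_span_range_iff_exists_fun R).symm

theorem exists_pair_of_finrank_eq_two {K V : Type*} [DivisionRing K] [AddCommGroup V]
    [Module K V] {D C : Submodule K V} (hD : Module.finrank K D = 2) (hDC : Disjoint D C) :
    ∃ z ∈ D, ∃ w ∈ D, z ∉ C ∧ w ∉ C ∧ z + w ∉ C := by
  have : Module.Finite K D := Module.finite_of_finrank_eq_succ hD
  let b := Module.finBasisOfFinrankEq K D hD
  have hnot : ∀ v : D, v ≠ 0 → (v : V) ∉ C := fun v hv hvC =>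
    hv (Subtype.ext (disjoint_def.1 hDC v v.2 hvC))
  refine ⟨b 0, (b 0).2, b 1, (b 1).2, hnot _ (b.ne_zero 0), hnot _ (b.ne_zero 1),
    hnot (b 0 + b 1) fun h => ?_⟩
  simpa using Fintype.linearIndependent_iff.1 b.linearIndependent (fun _ => 1)
    (by simpa [Fin.sum_univ_two] using h) 0

end Submodule

theorem rghw_one_eq {F ι : Type*} [Field F] [Fintype ι] [DecidableEq F]
    {C₁ C₂ : Submodule F (ι → F)} {x : ι → F} {m : ℕ} (hx₁ : x ∈ C₁) (hx₂ : x ∉ C₂)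
    (hx : hammingNorm x = m) (hmin : ∀ z ∈ C₁, z ∉ C₂ → m ≤ hammingNorm z) :
    rghw C₁ C₂ 1 = m := by
  have hx₀ : x ≠ 0 := fun h => hx₂ (h ▸ C₂.zero_mem)
  refine IsLeast.csInf_eq ⟨⟨span F {x}, (span_singleton_le_iff_mem x C₁).2 hx₁, ?_,
    finrank_span_singleton hx₀, by rw [ncard_suppSet_span_singleton, hx]⟩, ?_⟩
  · rw [inf_comm, ← disjoint_iff]
    exact (disjoint_span_singleton' hx₀).2 hx₂
  · rintro _ ⟨D, hD₁, hD₂, hD, rfl⟩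
    obtain ⟨z, hzD, hz₀⟩ := exists_mem_ne_zero_of_ne_bot fun h : D = ⊥ => by
      rw [h, finrank_bot] at hD
      exact zero_ne_one hD
    have hz₂ : z ∉ C₂ := fun hz => hz₀ (disjoint_def.1 (disjoint_iff.2 hD₂) z hzD hz)
    exact (hmin z (hD₁ hzD) hz₂).trans (hammingNorm_le_ncard_suppSet hzD)

section ZModTwo

theorem ZMod.eq_zero_or_eq_one (a : ZMod 2) : a = 0 ∨ a = 1 := by
  decide +revert

variable {ι : Type*} {C : Submodule (ZMod 2) (ι → ZMod 2)} {x y : ι → ZMod 2}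

theorem disjoint_span_pair_of_zmod_two (hx : x ∉ C) (hy : y ∉ C) (hxy : x + y ∉ C) :
    Disjoint (span (ZMod 2) {x, y}) C := by
  refine disjoint_def.2 fun _ hv hvC => ?_
  obtain ⟨a, b, rfl⟩ := mem_span_pair.1 hv
  rcases a.eq_zero_or_eq_one with rfl | rfl <;> rcases b.eq_zero_or_eq_one with rfl | rfl <;>
    simp_all

theorem finrank_span_pair_of_zmod_two (hx : x ∉ C) (hy : y ∉ C) (hxy : x + y ∉ C) :
    Module.finrank (ZMod 2) (span (ZMod 2) {x, y}) = 2 := by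
  have hli : LinearIndependent (ZMod 2) ![x, y] := LinearIndependent.pair_iff.2 fun s t hst => by
    rcases s.eq_zero_or_eq_one with rfl | rfl <;> rcases t.eq_zero_or_eq_one with rfl | rfl <;>
      simp_all
  rw [← Matrix.range_cons_cons_empty x y ![], finrank_span_eq_card hli, Fintype.card_fin]

/-- The weight bounds on `z` and `w` in `hmin` are free (a codeword of a subcode has weight at
most the support size of the subcode) and prune the enumeration. -/
theorem rghw_two_eq_of_zmod_two [Fintype ι] {C₁ C₂ : Submodule (ZMod 2) (ι → ZMod 2)} {m : ℕ}
    (hx₁ : x ∈ C₁) (hy₁ : y ∈ C₁) (hx₂ : x ∉ C₂) (hy₂ : y ∉ C₂) (hxy₂ : x + y ∉ C₂)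
    (hm : #{i | x i ≠ 0 ∨ y i ≠ 0} = m)
    (hmin : ∀ z ∈ C₁, hammingNorm z < m → z ∉ C₂ → ∀ w ∈ C₁, hammingNorm w < m → w ∉ C₂ →
      z + w ∉ C₂ → m ≤ #{i | z i ≠ 0 ∨ w i ≠ 0}) :
    rghw C₁ C₂ 2 = m := by
  refine IsLeast.csInf_eq ⟨⟨span _ {x, y}, span_le.2 (Set.pair_subset hx₁ hy₁),
    disjoint_iff.1 (disjoint_span_pair_of_zmod_two hx₂ hy₂ hxy₂),
    finrank_span_pair_of_zmod_two hx₂ hy₂ hxy₂, by rw [ncard_suppSet_span_pair, hm]⟩, ?_⟩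
  rintro _ ⟨D, hD₁, hD₂, hD, rfl⟩
  obtain ⟨z, hz, w, hw, hz₂, hw₂, hzw₂⟩ := exists_pair_of_finrank_eq_two hD (disjoint_iff.2 hD₂)
  by_contra! hlt
  refine (hmin z (hD₁ hz) ?_ hz₂ w (hD₁ hw) ?_ hw₂ hzw₂).not_gt
    ((card_support_pair_le_ncard_suppSet hz hw).trans_lt hlt)
  · exact (hammingNorm_le_ncard_suppSet hz).trans_lt hlt
  · exact (hammingNorm_le_ncard_suppSet hw).trans_lt hlt

end ZModTwo

section Dual

variable {F : Type*} [Field F] {n : ℕ}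

theorem mem_dualCode_span_range_iff {α : Type*} (G : α → Fin n → F) (x : Fin n → F) :
    x ∈ dualCode (span F (Set.range G)) ↔ ∀ j, ∑ i, x i * G j i = 0 := by
  refine ⟨fun h j => h (G j) (subset_span ⟨j, rfl⟩), fun h c hc => ?_⟩
  induction hc using span_induction with
  | mem c hc => obtain ⟨j, rfl⟩ := hc; exact h j
  | zero => simp
  | add c d _ _ hc hd => simp [mul_add, sum_add_distrib, hc, hd]
  | smul a c _ hc => simp [mul_left_comm, ← mul_sum, hc]

instance decidableMemDualCodeSpanRange [DecidableEq F] {α : Type*} [Fintype α]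
    (G : α → Fin n → F) (x : Fin n → F) : Decidable (x ∈ dualCode (span F (Set.range G))) :=
  decidable_of_iff _ (mem_dualCode_span_range_iff G x).symm

theorem dualCode_span_range_eq_ker {k : ℕ} (G : Fin k → Fin n → F) :
    dualCode (span F (Set.range G)) = LinearMap.ker (Matrix.of G).mulVecLin := by
  ext x
  simp [mem_dualCode_span_range_iff, funext_iff, Matrix.mulVec, dotProduct, mul_comm]

theorem finrank_dualCode_span_range {k : ℕ} {G : Fin k → Fin n → F}
    (hG : LinearIndependent F G) : Module.finrank F (dualCode (span F (Set.range G))) = n - k := by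
  have h : (Matrix.of G).rank + Module.finrank F (LinearMap.ker (Matrix.of G).mulVecLin) = n := by
    dsimp only [Matrix.rank]
    simp only [LinearMap.finrank_range_add_finrank_ker, Module.finrank_fin_fun]
  have hrank : (Matrix.of G).rank = k := by
    rw [Matrix.rank_eq_finrank_span_row]
    exact (finrank_span_eq_card hG).trans (Fintype.card_fin k)
  rw [dualCode_span_range_eq_ker]
  omega

theorem dualCode_span_range_eq_span_range {k l : ℕ} {G : Fin k → Fin n → F}
    {H : Fin l → Fin n → F} (hG : LinearIndependent F G) (hH : LinearIndependent F H)
    (hkl : k + l = n) (hHG : ∀ j, H j ∈ dualCode (span F (Set.range G))) :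
    dualCode (span F (Set.range G)) = span F (Set.range H) := by
  refine (eq_of_le_of_finrank_eq (span_le.2 (Set.range_subset_iff.2 hHG)) ?_).symm
  rw [finrank_span_eq_card hH, finrank_dualCode_span_range hG, Fintype.card_fin]
  omega

end Dual

namespace DualPairExample

set_option synthInstance.maxSize 512

def G₁ : Fin 5 → Fin 10 → ZMod 2 :=
  ![![0,1,0,1,0,0,1,0,0,0], ![1,1,1,1,1,1,1,0,1,0], ![0,0,0,0,0,0,1,1,0,1],
    ![1,0,0,1,0,0,0,0,0,0], ![0,0,1,1,0,1,0,0,0,0]]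

def G₂ : Fin 3 → Fin 10 → ZMod 2 :=
  ![![0,1,0,1,0,0,1,0,0,0], ![1,1,1,1,1,1,1,0,1,0], ![0,0,0,0,0,0,1,1,0,1]]

def G₁' : Fin 5 → Fin 10 → ZMod 2 :=
  ![![1,1,0,1,0,0,0,0,0,1], ![0,1,0,1,1,1,0,1,0,0], ![1,0,1,0,0,0,1,0,1,0],
    ![1,1,1,0,0,0,0,0,0,0], ![0,1,0,1,0,0,0,0,0,0]]

def G₂' : Fin 3 → Fin 10 → ZMod 2 :=
  ![![1,1,0,1,0,0,0,0,0,1], ![0,1,0,1,1,1,0,1,0,0], ![1,0,1,0,0,0,1,0,1,0]]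

def H₂ : Fin 7 → Fin 10 → ZMod 2 :=
  ![![1,0,0,0,0,0,0,0,1,0], ![0,1,0,0,0,0,1,0,0,1], ![0,0,1,0,0,0,0,0,1,0],
    ![0,0,0,1,0,0,1,0,0,1], ![0,0,0,0,1,0,0,0,1,0], ![0,0,0,0,0,1,0,0,1,0],
    ![0,0,0,0,0,0,0,1,0,1]]

def H₂' : Fin 7 → Fin 10 → ZMod 2 :=
  ![![1,0,0,0,0,0,0,0,1,1], ![0,1,0,0,0,0,0,1,0,1], ![0,0,1,0,0,0,0,0,1,0],
    ![0,0,0,1,0,0,0,1,0,1], ![0,0,0,0,1,0,0,1,0,0], ![0,0,0,0,0,1,0,1,0,0],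
    ![0,0,0,0,0,0,1,0,1,0]]

abbrev C₁ : Submodule (ZMod 2) (Fin 10 → ZMod 2) := span (ZMod 2) (Set.range G₁)
abbrev C₂ : Submodule (ZMod 2) (Fin 10 → ZMod 2) := span (ZMod 2) (Set.range G₂)
abbrev C₁' : Submodule (ZMod 2) (Fin 10 → ZMod 2) := span (ZMod 2) (Set.range G₁')
abbrev C₂' : Submodule (ZMod 2) (Fin 10 → ZMod 2) := span (ZMod 2) (Set.range G₂')

theorem C₂_le_C₁ : C₂ ≤ C₁ := by
  rw [span_le, Set.range_subset_iff]
  simp only [SetLike.mem_coe]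
  decide

theorem C₂'_le_C₁' : C₂' ≤ C₁' := by
  rw [span_le, Set.range_subset_iff]
  simp only [SetLike.mem_coe]
  decide

theorem dualCode_C₂ : dualCode C₂ = span (ZMod 2) (Set.range H₂) :=
  dualCode_span_range_eq_span_range (Fintype.linearIndependent_iff.2 (by decide))
    (Fintype.linearIndependent_iff.2 (by decide +kernel)) rfl (by decide)

theorem dualCode_C₂' : dualCode C₂' = span (ZMod 2) (Set.range H₂') :=
  dualCode_span_range_eq_span_range (Fintype.linearIndependent_iff.2 (by decide))
    (Fintype.linearIndependent_iff.2 (by decide +kernel)) rfl (by decide)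

theorem rghw_C₁_C₂_one : rghw C₁ C₂ 1 = 2 :=
  rghw_one_eq (x := ![1,0,0,1,0,0,0,0,0,0]) (by decide) (by decide) (by decide)
    (by rw [forall_mem_span_range_iff]; decide)

theorem rghw_C₁'_C₂'_one : rghw C₁' C₂' 1 = 2 :=
  rghw_one_eq (x := ![1,0,0,0,0,0,0,0,0,1]) (by decide) (by decide) (by decide)
    (by rw [forall_mem_span_range_iff]; decide)

theorem rghw_C₁_C₂_two : rghw C₁ C₂ 2 = 4 :=
  rghw_two_eq_of_zmod_two (x := ![1,0,0,1,1,0,0,0,1,0]) (y := ![1,0,0,1,0,0,0,0,0,0])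
    (by decide) (by decide) (by decide) (by decide) (by decide) (by decide)
    (by simp only [forall_mem_span_range_iff]; decide +kernel)

theorem rghw_C₁'_C₂'_two : rghw C₁' C₂' 2 = 4 :=
  rghw_two_eq_of_zmod_two (x := ![1,1,1,0,0,0,0,0,0,0]) (y := ![0,1,1,0,0,0,0,0,0,1])
    (by decide) (by decide) (by decide) (by decide) (by decide) (by decide)
    (by simp only [forall_mem_span_range_iff]; decide +kernel)

theorem rghw_dualCode_C₂_C₁_one : rghw (dualCode C₂) (dualCode C₁) 1 = 2 :=
  rghw_one_eq (x := ![1,0,0,0,0,1,0,0,0,0]) (by decide) (by decide) (by decide)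
    (by rw [dualCode_C₂, forall_mem_span_range_iff]; decide +kernel)

theorem rghw_dualCode_C₂'_C₁'_one : rghw (dualCode C₂') (dualCode C₁') 1 = 2 :=
  rghw_one_eq (x := ![0,1,0,1,0,0,0,0,0,0]) (by decide) (by decide) (by decide)
    (by rw [dualCode_C₂', forall_mem_span_range_iff]; decide +kernel)

theorem rghw_dualCode_C₂_C₁_two : rghw (dualCode C₂) (dualCode C₁) 2 = 3 :=
  rghw_two_eq_of_zmod_two (x := ![1,0,0,0,0,1,0,0,0,0]) (y := ![1,0,0,0,1,0,0,0,0,0])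
    (by decide) (by decide) (by decide) (by decide) (by decide) (by decide)
    (by simp only [dualCode_C₂, forall_mem_span_range_iff]; decide +kernel)

theorem rghw_dualCode_C₂'_C₁'_two : rghw (dualCode C₂') (dualCode C₁') 2 = 4 :=
  rghw_two_eq_of_zmod_two (x := ![0,0,0,1,0,1,0,0,0,1]) (y := ![0,1,0,0,0,1,0,0,0,1])
    (by decide) (by decide) (by decide) (by decide) (by decide) (by decide)
    (by simp only [dualCode_C₂', forall_mem_span_range_iff]; decide +kernel)

end DualPairExample

/-- RGHWs of a pair do not determine the RGHWs of the dual pair: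
for the explicit binary codes `C₁, C₂, C₁', C₂' ⊆ F_2^10` generated by the rows of
`G₁, G₂, G₁', G₂'` below, we have `C₂ ⊆ C₁`, `C₂' ⊆ C₁'`,
`M_1(C₁,C₂) = M_1(C₁',C₂') = 2`, `M_2(C₁,C₂) = M_2(C₁',C₂') = 4`, while for the duals
`M_1(C₂^⊥,C₁^⊥) = M_1((C₂')^⊥,(C₁')^⊥) = 2` but
`M_2(C₂^⊥,C₁^⊥) = 3 ≠ 4 = M_2((C₂')^⊥,(C₁')^⊥)`. -/
theorem statement_19 :
    let G₁ : Fin 5 → (Fin 10 → ZMod 2) :=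
      ![![0,1,0,1,0,0,1,0,0,0], ![1,1,1,1,1,1,1,0,1,0], ![0,0,0,0,0,0,1,1,0,1],
        ![1,0,0,1,0,0,0,0,0,0], ![0,0,1,1,0,1,0,0,0,0]]
    let G₂ : Fin 3 → (Fin 10 → ZMod 2) :=
      ![![0,1,0,1,0,0,1,0,0,0], ![1,1,1,1,1,1,1,0,1,0], ![0,0,0,0,0,0,1,1,0,1]]
    let G₁' : Fin 5 → (Fin 10 → ZMod 2) :=
      ![![1,1,0,1,0,0,0,0,0,1], ![0,1,0,1,1,1,0,1,0,0], ![1,0,1,0,0,0,1,0,1,0],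
        ![1,1,1,0,0,0,0,0,0,0], ![0,1,0,1,0,0,0,0,0,0]]
    let G₂' : Fin 3 → (Fin 10 → ZMod 2) :=
      ![![1,1,0,1,0,0,0,0,0,1], ![0,1,0,1,1,1,0,1,0,0], ![1,0,1,0,0,0,1,0,1,0]]
    let C₁ := Submodule.span (ZMod 2) (Set.range G₁)
    let C₂ := Submodule.span (ZMod 2) (Set.range G₂)
    let C₁' := Submodule.span (ZMod 2) (Set.range G₁')
    let C₂' := Submodule.span (ZMod 2) (Set.range G₂')
    C₂ ≤ C₁ ∧ C₂' ≤ C₁' ∧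
    rghw C₁ C₂ 1 = 2 ∧ rghw C₁' C₂' 1 = 2 ∧
    rghw C₁ C₂ 2 = 4 ∧ rghw C₁' C₂' 2 = 4 ∧
    rghw (dualCode C₂) (dualCode C₁) 1 = 2 ∧
    rghw (dualCode C₂') (dualCode C₁') 1 = 2 ∧
    rghw (dualCode C₂) (dualCode C₁) 2 = 3 ∧
    rghw (dualCode C₂') (dualCode C₁') 2 = 4 := by
  intro G₁ G₂ G₁' G₂' C₁ C₂ C₁' C₂'
  exact ⟨DualPairExample.C₂_le_C₁, DualPairExample.C₂'_le_C₁',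
    DualPairExample.rghw_C₁_C₂_one, DualPairExample.rghw_C₁'_C₂'_one,
    DualPairExample.rghw_C₁_C₂_two, DualPairExample.rghw_C₁'_C₂'_two,
    DualPairExample.rghw_dualCode_C₂_C₁_one, DualPairExample.rghw_dualCode_C₂'_C₁'_one,
    DualPairExample.rghw_dualCode_C₂_C₁_two, DualPairExample.rghw_dualCode_C₂'_C₁'_two⟩
end
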